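/- arXiv:2605.15821 — 3 statements merged into one kernel-verified Lean document; each statement's English description precedes it below -/
import Mathlib

section
/- Let f be a real polynomial in n variables with deg f = d. Then ‖f‖_{1,coef} − f belongs to the truncated quadratic module Q(1 ± x)_{2d+1}. -/
open MvPolynomial

noncomputable section

/-- A polynomial is a sum of squares. -/
def IsSOS {n : ℕ} (p : MvPolynomial (Fin n) ℝ) : Prop :=
  ∃ (k : ℕ) (q : Fin k → MvPolynomial (Fin n) ℝ), p = ∑ i, q i ^ 2

/-- The truncated quadratic module `Q(g)_r`. -/
def QM {n : ℕ} {ι : Type} [Fintype ι] (g : ι → MvPolynomial (Fin n) ℝ) (r : ℕ) :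
    Set (MvPolynomial (Fin n) ℝ) :=
  { p | ∃ (σ₀ : MvPolynomial (Fin n) ℝ) (σ : ι → MvPolynomial (Fin n) ℝ),
      IsSOS σ₀ ∧ (∀ j, IsSOS (σ j)) ∧ σ₀.totalDegree ≤ r ∧
      (∀ j, (σ j * g j).totalDegree ≤ r) ∧
      p = σ₀ + ∑ j, σ j * g j }

/-- The truncated preorder `T(g)_r`. -/
def TP {n : ℕ} {ι : Type} [Fintype ι] [DecidableEq ι] (g : ι → MvPolynomial (Fin n) ℝ)
    (r : ℕ) : Set (MvPolynomial (Fin n) ℝ) :=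
  { p | ∃ σ : Finset ι → MvPolynomial (Fin n) ℝ,
      (∀ S, IsSOS (σ S)) ∧ (∀ S : Finset ι, (σ S * ∏ j ∈ S, g j).totalDegree ≤ r) ∧
      p = ∑ S : Finset ι, σ S * ∏ j ∈ S, g j }

/-- The truncated preprime `R(g)_r`. -/
def RP {n : ℕ} {ι : Type} [Fintype ι] (g : ι → MvPolynomial (Fin n) ℝ) (r : ℕ) :
    Set (MvPolynomial (Fin n) ℝ) :=
  { p | ∃ (A : Finset (ι → ℕ)) (s : (ι → ℕ) → ℝ),
      (∀ α ∈ A, 0 ≤ s α) ∧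
      (∀ α ∈ A, s α ≠ 0 → (MvPolynomial.C (s α) * ∏ j, g j ^ α j).totalDegree ≤ r) ∧
      p = ∑ α ∈ A, MvPolynomial.C (s α) * ∏ j, g j ^ α j }

/-- The tuple of the `2n` polynomials `1 ± xᵢ`. -/
def pmX (n : ℕ) : Fin n × Bool → MvPolynomial (Fin n) ℝ :=
  fun q => if q.2 then 1 + MvPolynomial.X q.1 else 1 - MvPolynomial.X q.1

/-- The hypercube `[-1,1]^n`. -/
def Box (n : ℕ) : Set (Fin n → ℝ) := { x | ∀ i, |x i| ≤ 1 }

/-- The hypercube `[0,1]^n`. -/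
def Box01 (n : ℕ) : Set (Fin n → ℝ) := { x | ∀ i, 0 ≤ x i ∧ x i ≤ 1 }

/-- The sup norm of a polynomial on `[-1,1]^n`. -/
def supNorm {n : ℕ} (f : MvPolynomial (Fin n) ℝ) : ℝ :=
  sSup ((fun x => |MvPolynomial.eval x f|) '' Box n)

/-- The sup norm of a polynomial on `[0,1]^n`. -/
def supNorm01 {n : ℕ} (f : MvPolynomial (Fin n) ℝ) : ℝ :=
  sSup ((fun x => |MvPolynomial.eval x f|) '' Box01 n)

/-- The semialgebraic set `S_g`. -/
def Sg {n m : ℕ} (g : Fin m → MvPolynomial (Fin n) ℝ) : Set (Fin n → ℝ) :=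
  { x | ∀ j, 0 ≤ MvPolynomial.eval x (g j) }

/-- The maximum violation function `G`. -/
def Gfun {n m : ℕ} (g : Fin m → MvPolynomial (Fin n) ℝ) (x : Fin n → ℝ) : ℝ :=
  ⨆ j, max 0 (-(MvPolynomial.eval x (g j)))

/-- The squared Euclidean norm of the violation vector `H`. -/
def Hfun {n m : ℕ} (g : Fin m → MvPolynomial (Fin n) ℝ) (x : Fin n → ℝ) : ℝ :=
  ∑ j, max 0 (-(MvPolynomial.eval x (g j))) ^ 2

/-- Euclidean distance from a point to a set. -/
def euclDist {n : ℕ} (x : Fin n → ℝ) (S : Set (Fin n → ℝ)) : ℝ :=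
  sInf ((fun y => Real.sqrt (∑ i, (x i - y i) ^ 2)) '' S)

/-- The minimum of `f` over `S_g`. -/
def fMin {n m : ℕ} (g : Fin m → MvPolynomial (Fin n) ℝ) (f : MvPolynomial (Fin n) ℝ) : ℝ :=
  sInf ((fun x => MvPolynomial.eval x f) '' Sg g)

/-- The ℓ₁ norm of the coefficient vector of `f`. -/
def coeffL1 {n : ℕ} (f : MvPolynomial (Fin n) ℝ) : ℝ :=
  ∑ α ∈ f.support, |MvPolynomial.coeff α f|

/-- The constant `C(N,D)` of the effective Schmüdgen Positivstellensatz on the cube. -/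
def Cconst (N D : ℕ) : ℝ :=
  Real.pi * (N : ℝ) ^ ((1:ℝ)/2) * (Real.sqrt 2 * ((D : ℝ) + 1)) ^ ((N : ℝ)/2 + 1)

end

/-!
Writing `f = ∑ c_α x^α`, we get `‖f‖₁ - f = ∑ (|c_α| - c_α x^α)`, and `|c| - c m` is a
nonnegative multiple of `1 - m` or of `1 + m`. Since `1 ∓ m = ½ (1 ∓ m)² + ½ (1 - m²)`, it
suffices to put `1 - m²` into `Q(1 ± x)_{2k+1}` for every monomial `m` of degree `k`. This
follows from `1 - xᵢ² = ½ (1 - xᵢ)² (1 + xᵢ) + ½ (1 + xᵢ)² (1 - xᵢ)` and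
`1 - (u v)² = (1 - u²) v² + (1 - v²)`.
-/

section

variable {n : ℕ}

theorem IsSOS.zero : IsSOS (0 : MvPolynomial (Fin n) ℝ) := ⟨0, fun _ => 0, by simp⟩

theorem IsSOS.sq (p : MvPolynomial (Fin n) ℝ) : IsSOS (p ^ 2) := ⟨1, fun _ => p, by simp⟩

theorem IsSOS.add {p q : MvPolynomial (Fin n) ℝ} (hp : IsSOS p) (hq : IsSOS q) :
    IsSOS (p + q) := by
  obtain ⟨k, a, rfl⟩ := hp
  obtain ⟨l, b, rfl⟩ := hq
  exact ⟨k + l, Fin.addCases a b, by simp [Fin.sum_univ_add]⟩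

theorem IsSOS.mul_sq {p : MvPolynomial (Fin n) ℝ} (hp : IsSOS p) (q : MvPolynomial (Fin n) ℝ) :
    IsSOS (p * q ^ 2) := by
  obtain ⟨k, a, rfl⟩ := hp
  exact ⟨k, fun i => a i * q, by simp only [Finset.sum_mul, mul_pow]⟩

theorem IsSOS.C_mul {p : MvPolynomial (Fin n) ℝ} (hp : IsSOS p) {c : ℝ} (hc : 0 ≤ c) :
    IsSOS (C c * p) := by
  simpa [← C_pow, Real.sq_sqrt hc, mul_comm] using hp.mul_sq (C (Real.sqrt c))

theorem C_half_mul_two : (C (1 / 2) : MvPolynomial (Fin n) ℝ) * 2 = 1 := by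
  rw [← map_ofNat C 2, ← C_mul]; norm_num

theorem totalDegree_C_mul_le (c : ℝ) (p : MvPolynomial (Fin n) ℝ) :
    (C c * p).totalDegree ≤ p.totalDegree := by
  simpa using totalDegree_mul (C c) p

theorem totalDegree_pmX_le (j : Fin n × Bool) : (pmX n j).totalDegree ≤ 1 := by
  obtain ⟨i, _ | _⟩ := j
  · simpa [pmX] using totalDegree_sub (1 : MvPolynomial (Fin n) ℝ) (X i)
  · simpa [pmX] using totalDegree_add (1 : MvPolynomial (Fin n) ℝ) (X i)

end

namespace QM

variable {n : ℕ} {ι : Type} [Fintype ι] {g : ι → MvPolynomial (Fin n) ℝ} {r : ℕ}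

theorem zero_mem : (0 : MvPolynomial (Fin n) ℝ) ∈ QM g r :=
  ⟨0, fun _ => 0, .zero, fun _ => .zero, by simp, by simp, by simp⟩

theorem add_mem {p q : MvPolynomial (Fin n) ℝ} (hp : p ∈ QM g r) (hq : q ∈ QM g r) :
    p + q ∈ QM g r := by
  obtain ⟨σ₀, σ, hσ₀, hσ, hdeg₀, hdeg, rfl⟩ := hp
  obtain ⟨τ₀, τ, hτ₀, hτ, hdeg₀', hdeg', rfl⟩ := hq
  refine ⟨σ₀ + τ₀, σ + τ, hσ₀.add hτ₀, fun j => (hσ j).add (hτ j),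
    (totalDegree_add _ _).trans (max_le hdeg₀ hdeg₀'), fun j => ?_, ?_⟩
  · rw [Pi.add_apply, add_mul]
    exact (totalDegree_add _ _).trans (max_le (hdeg j) (hdeg' j))
  · simp only [Pi.add_apply, add_mul, Finset.sum_add_distrib]
    ring

theorem sum_mem {κ : Type*} (s : Finset κ) {p : κ → MvPolynomial (Fin n) ℝ}
    (hp : ∀ k ∈ s, p k ∈ QM g r) : ∑ k ∈ s, p k ∈ QM g r :=
  Finset.sum_induction p (· ∈ QM g r) (fun _ _ => add_mem) zero_mem hp

theorem mono {r' : ℕ} (h : r ≤ r') {p : MvPolynomial (Fin n) ℝ} (hp : p ∈ QM g r) :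
    p ∈ QM g r' := by
  obtain ⟨σ₀, σ, hσ₀, hσ, hdeg₀, hdeg, rfl⟩ := hp
  exact ⟨σ₀, σ, hσ₀, hσ, hdeg₀.trans h, fun j => (hdeg j).trans h, rfl⟩

theorem mul_sq_mem {p : MvPolynomial (Fin n) ℝ} (hp : p ∈ QM g r)
    (q : MvPolynomial (Fin n) ℝ) :
    p * q ^ 2 ∈ QM g (r + 2 * q.totalDegree) := by
  obtain ⟨σ₀, σ, hσ₀, hσ, hdeg₀, hdeg, rfl⟩ := hp
  have hq : (q ^ 2).totalDegree ≤ 2 * q.totalDegree := totalDegree_pow q 2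
  refine ⟨σ₀ * q ^ 2, fun j => σ j * q ^ 2, hσ₀.mul_sq q, fun j => (hσ j).mul_sq q,
    (totalDegree_mul _ _).trans (by omega), fun j => ?_, ?_⟩
  · rw [mul_right_comm]
    exact (totalDegree_mul _ _).trans (by have := hdeg j; omega)
  · simp only [add_mul, Finset.sum_mul, mul_right_comm]

theorem C_mul_mem {c : ℝ} (hc : 0 ≤ c) {p : MvPolynomial (Fin n) ℝ} (hp : p ∈ QM g r) :
    C c * p ∈ QM g r := by
  have h := mul_sq_mem hp (C (Real.sqrt c))
  rwa [totalDegree_C, mul_zero, add_zero, ← C_pow, Real.sq_sqrt hc, mul_comm] at h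

theorem sos_mem {p : MvPolynomial (Fin n) ℝ} (hp : IsSOS p) (hdeg : p.totalDegree ≤ r) :
    p ∈ QM g r :=
  ⟨p, 0, hp, fun _ => .zero, hdeg, by simp, by simp⟩

theorem sos_mul_mem [DecidableEq ι] {σ : MvPolynomial (Fin n) ℝ} (hσ : IsSOS σ) (j : ι)
    (hdeg : (σ * g j).totalDegree ≤ r) : σ * g j ∈ QM g r := by
  refine ⟨0, Pi.single j σ, .zero, fun k => ?_, by simp, fun k => ?_, ?_⟩
  · rcases eq_or_ne k j with rfl | hk
    · simpa using hσ
    · simpa [hk] using IsSOS.zero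
  · rcases eq_or_ne k j with rfl | hk
    · simpa using hdeg
    · simp [hk]
  · simp [Pi.single_apply]

end QM

section

variable {n : ℕ} {ι : Type} [Fintype ι] {g : ι → MvPolynomial (Fin n) ℝ}

theorem one_sub_sq_mul_mem {u v : MvPolynomial (Fin n) ℝ} {k l : ℕ}
    (hu : 1 - u ^ 2 ∈ QM g (2 * k + 1)) (hv : 1 - v ^ 2 ∈ QM g (2 * l + 1))
    (hvdeg : v.totalDegree ≤ l) : 1 - (u * v) ^ 2 ∈ QM g (2 * (k + l) + 1) := by
  have h : 1 - (u * v) ^ 2 = (1 - u ^ 2) * v ^ 2 + (1 - v ^ 2) := by ring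
  rw [h]
  exact QM.add_mem (QM.mono (by omega) (QM.mul_sq_mem hu v)) (QM.mono (by omega) hv)

theorem one_sub_mem_of_one_sub_sq_mem {r : ℕ} {u : MvPolynomial (Fin n) ℝ}
    (hu : 1 - u ^ 2 ∈ QM g r) (hdeg : 2 * u.totalDegree ≤ r) : 1 - u ∈ QM g r := by
  have h : 1 - u = C (1 / 2) * (1 - u) ^ 2 + C (1 / 2) * (1 - u ^ 2) := by
    linear_combination (u - 1) * C_half_mul_two
  have hdeg' : (C (1 / 2) * (1 - u) ^ 2).totalDegree ≤ r :=
    calc (C (1 / 2) * (1 - u) ^ 2).totalDegree ≤ 2 * (1 - u).totalDegree :=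
          (totalDegree_C_mul_le _ _).trans (totalDegree_pow _ _)
      _ ≤ r := (Nat.mul_le_mul_left 2 ((totalDegree_sub 1 u).trans (by simp))).trans hdeg
  rw [h]
  exact QM.add_mem (QM.sos_mem ((IsSOS.sq _).C_mul (by norm_num)) hdeg')
    (QM.C_mul_mem (by norm_num) hu)

theorem abs_sub_C_mul_mem {r : ℕ} {u : MvPolynomial (Fin n) ℝ}
    (hu : 1 - u ^ 2 ∈ QM g r) (hdeg : 2 * u.totalDegree ≤ r) (c : ℝ) :
    C |c| - C c * u ∈ QM g r := by
  rcases le_or_gt 0 c with hc | hc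
  · have h : C |c| - C c * u = C c * (1 - u) := by rw [abs_of_nonneg hc]; ring
    rw [h]
    exact QM.C_mul_mem hc (one_sub_mem_of_one_sub_sq_mem hu hdeg)
  · have h : C |c| - C c * u = C (-c) * (1 - -u) := by rw [abs_of_neg hc, map_neg]; ring
    rw [h]
    exact QM.C_mul_mem (by linarith)
      (one_sub_mem_of_one_sub_sq_mem (by rwa [neg_sq]) (by rwa [totalDegree_neg]))

end

section

variable {n : ℕ}

theorem one_sub_X_sq_mem (i : Fin n) : 1 - X i ^ 2 ∈ QM (pmX n) 3 := by
  have h : 1 - X i ^ 2 = C (1 / 2) * pmX n (i, false) ^ 2 * pmX n (i, true)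
      + C (1 / 2) * pmX n (i, true) ^ 2 * pmX n (i, false) := by
    simp only [pmX, Bool.false_eq_true, if_true, if_false]
    linear_combination (X i ^ 2 - 1) * C_half_mul_two
  have hdeg (a b : Bool) : (C (1 / 2) * pmX n (i, a) ^ 2 * pmX n (i, b)).totalDegree ≤ 3 :=
    calc _ ≤ (C (1 / 2) * pmX n (i, a) ^ 2).totalDegree + (pmX n (i, b)).totalDegree :=
          totalDegree_mul _ _
      _ ≤ 2 * (pmX n (i, a)).totalDegree + 1 :=
          add_le_add ((totalDegree_C_mul_le _ _).trans (totalDegree_pow _ _))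
            (totalDegree_pmX_le _)
      _ ≤ 3 := by have := totalDegree_pmX_le (i, a); omega
  rw [h]
  exact QM.add_mem (QM.sos_mul_mem ((IsSOS.sq _).C_mul (by norm_num)) _ (hdeg _ _))
    (QM.sos_mul_mem ((IsSOS.sq _).C_mul (by norm_num)) _ (hdeg _ _))

theorem one_sub_X_pow_sq_mem (i : Fin n) (b : ℕ) :
    1 - (X i ^ b) ^ 2 ∈ QM (pmX n) (2 * b + 1) := by
  induction b with
  | zero => simpa using QM.zero_mem
  | succ b ih =>
    rw [pow_succ]
    exact one_sub_sq_mul_mem ih (one_sub_X_sq_mem i) (totalDegree_X i).le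

theorem one_sub_monomial_sq_mem (α : Fin n →₀ ℕ) :
    1 - monomial α (1 : ℝ) ^ 2 ∈ QM (pmX n) (2 * α.degree + 1) := by
  induction α using Finsupp.induction_linear with
  | zero => simpa using QM.zero_mem
  | add α β hα hβ =>
    rw [← mul_one (1 : ℝ), ← monomial_mul, map_add]
    exact one_sub_sq_mul_mem hα hβ (totalDegree_monomial β one_ne_zero).le
  | single i b => rw [← X_pow_eq_monomial, Finsupp.degree_single]; exact one_sub_X_pow_sq_mem i b

end

/-- `‖f‖_{1,coef} − f ∈ Q(1 ± x)_{2d+1}` where `d = deg f`. -/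
theorem stmt4 {n : ℕ} (f : MvPolynomial (Fin n) ℝ) (d : ℕ) (hd : f.totalDegree = d) :
    MvPolynomial.C (coeffL1 f) - f ∈ QM (pmX n) (2 * d + 1) := by
  have hsplit : C (coeffL1 f) - f
      = ∑ α ∈ f.support, (C |coeff α f| - C (coeff α f) * monomial α 1) := by
    rw [coeffL1, map_sum, Finset.sum_sub_distrib]
    simp only [C_mul_monomial, mul_one]
    rw [← f.as_sum]
  rw [hsplit]
  refine QM.sum_mem _ fun α hα => ?_
  have hα : α.degree ≤ d := hd ▸ le_totalDegree hα
  refine abs_sub_C_mul_mem (QM.mono (by omega) (one_sub_monomial_sq_mem α)) ?_ _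
  rw [totalDegree_monomial α one_ne_zero]
  exact Nat.mul_le_mul_left 2 hα |>.trans (by omega)
end

section
/- Let f be a real polynomial in n variables with deg f = d, and let g₁,…,g_m be real polynomials such that S_g := {x ∈ ℝⁿ : g_j(x) ≥ 0 for all j} is nonempty and contained in [−1,1]ⁿ. Suppose L ≥ 1 and c > 0 satisfy the Łojasiewicz inequality dist(x, S_g)^L ≤ c·G(x) for all x ∈ [−1,1]ⁿ. If f_min := min_{x ∈ S_g} f(x) > 0, then for all x ∈ [−1,1]ⁿ, max{0, f_min − f(x)} ≤ (1/2)·c²·(4d²·κ)^{2L}·f_min·H(x) + (1/2)·f_min, where κ := ‖f‖_sup / f_min. -/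
/-!
Markov's inequality `|p'(1)| ≤ d² · sup_{[-1,1]} |p|`, applied to `f` restricted to chords of the
cube, bounds the derivative of `f` on `[-1,1]ⁿ` (as a map on the sup-normed space), so `f` is
Lipschitz there with constant `2d²‖f‖_sup`. Hence a point `x` with `f(x) < f_min` is at Euclidean
distance at least `(f_min - f(x)) / (2d²‖f‖_sup)` from `S_g`, and the Łojasiewicz inequality together
with `G² ≤ H` converts this into a lower bound on `H(x)`. If the excess `f_min - f(x)` exceeds
`f_min / 2`, then `t = 2(f_min - f(x)) / f_min ≥ 1`, and `t ≤ t² ≤ t^{2L}` gives the estimate;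
otherwise the term `f_min / 2` alone suffices.
-/

open MvPolynomial

open scoped Polynomial
open Set

theorem abs_derivative_eval_one_le {n : ℕ} {P : ℝ[X]} {S : ℝ} (hS : 0 < S)
    (hdeg : P.natDegree ≤ n) (hP : ∀ x ∈ Icc (-1 : ℝ) 1, |P.eval x| ≤ S) :
    |(Polynomial.derivative P).eval 1| ≤ n ^ 2 * S := by
  have hdeg' : P.degree ≤ n := Polynomial.degree_le_of_natDegree_le hdeg
  have hQ : ∀ ε : ℝ, |ε| = 1 → ∀ x ∈ Icc (-1 : ℝ) 1, |((ε / S) • P).eval x| ≤ 1 :=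
    fun ε hε x hx => by
      rw [Polynomial.eval_smul, smul_eq_mul, abs_mul, abs_div, hε, abs_of_pos hS, one_div,
        inv_mul_le_one₀ hS]
      exact hP x hx
  have hMarkov : ∀ ε : ℝ, |ε| = 1 → ε / S * (Polynomial.derivative P).eval 1 ≤ n ^ 2 :=
    fun ε hε => by
      simpa [Polynomial.Chebyshev.derivative_T_eval_one] using
        Polynomial.Chebyshev.eval_iterate_derivative_le_of_forall_abs_le_one (k := 1) le_rfl
          ((Polynomial.degree_smul_le _ _).trans hdeg') (hQ ε hε)
  have h1 := hMarkov 1 abs_one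
  have h2 := hMarkov (-1) (by simp)
  rw [div_mul_eq_mul_div, div_le_iff₀ hS] at h1 h2
  rw [abs_le]
  constructor <;> linarith

theorem box_eq_closedBall (n : ℕ) : Box n = Metric.closedBall 0 1 := by
  ext x
  simp [Box, pi_norm_le_iff_of_nonneg]

theorem isCompact_box (n : ℕ) : IsCompact (Box n) :=
  box_eq_closedBall n ▸ isCompact_closedBall 0 1

theorem convex_box (n : ℕ) : Convex ℝ (Box n) :=
  box_eq_closedBall n ▸ convex_closedBall 0 1

namespace MvPolynomial

variable {σ : Type*}

noncomputable def restrictLine (f : MvPolynomial σ ℝ) (a b : σ → ℝ) : ℝ[X] :=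
  aeval (fun i => Polynomial.C (a i) + Polynomial.C (b i) * Polynomial.X) f

theorem eval_restrictLine (f : MvPolynomial σ ℝ) (a b : σ → ℝ) (t : ℝ) :
    (f.restrictLine a b).eval t = eval (a + t • b) f := by
  induction f using MvPolynomial.induction_on with
  | C r => simp [restrictLine]
  | add p q hp hq => simp_all [restrictLine]
  | mul_X p i hp =>
    simp only [restrictLine, map_mul, aeval_X, Polynomial.eval_mul] at hp ⊢
    simp only [hp, Polynomial.eval_add, Polynomial.eval_C, Polynomial.eval_X, eval_X,
      Polynomial.eval_mul, Pi.add_apply, Pi.smul_apply, smul_eq_mul]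
    ring

theorem natDegree_restrictLine_le (f : MvPolynomial σ ℝ) (a b : σ → ℝ) :
    (f.restrictLine a b).natDegree ≤ f.totalDegree := by
  have hlin : ∀ i, (Polynomial.C (a i) + Polynomial.C (b i) * Polynomial.X).natDegree ≤ 1 :=
    fun i => (Polynomial.natDegree_add_le _ _).trans
      (max_le (by simp) ((Polynomial.natDegree_C_mul_le _ _).trans Polynomial.natDegree_X_le))
  conv_lhs => rw [restrictLine, f.as_sum, map_sum]
  refine Polynomial.natDegree_sum_le_of_forall_le _ _ fun α hα => ?_
  rw [aeval_monomial, ← Polynomial.C_eq_algebraMap]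
  refine (Polynomial.natDegree_C_mul_le _ _).trans ?_
  refine (Polynomial.natDegree_prod_le _ _).trans (le_trans ?_ (le_totalDegree hα))
  refine Finset.sum_le_sum fun i _ => Polynomial.natDegree_pow_le.trans ?_
  simpa using Nat.mul_le_mul_left (α i) (hlin i)

end MvPolynomial

theorem MvPolynomial.differentiable_eval {σ : Type*} [Fintype σ] (f : MvPolynomial σ ℝ) :
    Differentiable ℝ (fun z => eval z f) :=
  fun z => (AnalyticOnNhd.eval_mvPolynomial f z (mem_univ z)).differentiableAt

section Markov

variable {n d : ℕ} {f : MvPolynomial (Fin n) ℝ} {S : ℝ}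

theorem abs_fderiv_eval_sub_le (hdeg : f.totalDegree ≤ d) (hS : 0 < S)
    (hf : ∀ z ∈ Box n, |eval z f| ≤ S) {x y : Fin n → ℝ} (hx : x ∈ Box n) (hy : y ∈ Box n) :
    |fderiv ℝ (fun z => eval z f) x (x - y)| ≤ 2 * d ^ 2 * S := by
  -- `t ↦ a + t • b` runs along the chord from `y` (at `t = -1`) to `x` (at `t = 1`)
  set a : Fin n → ℝ := (1 / 2 : ℝ) • (x + y)
  set b : Fin n → ℝ := (1 / 2 : ℝ) • (x - y)
  set q := f.restrictLine a b
  have hline : ∀ t ∈ Icc (-1 : ℝ) 1, a + t • b ∈ Box n := fun t ht => by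
    have hcombo : a + t • b = ((1 + t) / 2) • x + ((1 - t) / 2) • y := by
      ext i; simp [a, b]; ring
    rw [hcombo]
    exact convex_box n hx hy (by linarith [ht.1]) (by linarith [ht.2]) (by ring)
  have hq : ∀ t ∈ Icc (-1 : ℝ) 1, |q.eval t| ≤ S := fun t ht => by
    rw [eval_restrictLine]
    exact hf _ (hline t ht)
  have hMarkov := abs_derivative_eval_one_le hS ((natDegree_restrictLine_le f a b).trans hdeg) hq
  have hend : a + (1 : ℝ) • b = x := by
    ext i; simp [a, b]; ring
  have hderiv : (Polynomial.derivative q).eval 1 = fderiv ℝ (fun z => eval z f) x b := by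
    have hchain : HasDerivAt (fun t : ℝ => eval (a + t • b) f)
        (fderiv ℝ (fun z => eval z f) x b) 1 := by
      have hline' := ((hasDerivAt_id (1 : ℝ)).smul_const b).const_add a
      rw [one_smul] at hline'
      exact (f.differentiable_eval x).hasFDerivAt.comp_hasDerivAt_of_eq 1 hline' hend.symm
    have hpoly := q.hasDerivAt 1
    simp only [q, eval_restrictLine] at hpoly
    exact hpoly.unique hchain
  have hhalf : fderiv ℝ (fun z => eval z f) x (x - y) = 2 * fderiv ℝ (fun z => eval z f) x b := by
    simp only [b, map_smul, smul_eq_mul]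
    ring
  rw [hhalf, ← hderiv, abs_mul, abs_two]
  linarith

theorem norm_fderiv_eval_le (hdeg : f.totalDegree ≤ d) (hS : 0 < S)
    (hf : ∀ z ∈ Box n, |eval z f| ≤ S) {x : Fin n → ℝ} (hx : x ∈ Box n) :
    ‖fderiv ℝ (fun z => eval z f) x‖ ≤ 2 * d ^ 2 * S := by
  refine ContinuousLinearMap.opNorm_le_of_unit_norm (by positivity) fun v hv => ?_
  have hmem : ∀ w : Fin n → ℝ, ‖w‖ = 1 → w ∈ Box n := fun w hw => by
    rw [box_eq_closedBall, mem_closedBall_zero_iff, hw]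
  have hplus := abs_fderiv_eval_sub_le hdeg hS hf hx (hmem (-v) (by rw [norm_neg, hv]))
  have hminus := abs_fderiv_eval_sub_le hdeg hS hf hx (hmem v hv)
  have hsplit : fderiv ℝ (fun z => eval z f) x v = (fderiv ℝ (fun z => eval z f) x (x - -v)
      - fderiv ℝ (fun z => eval z f) x (x - v)) / 2 := by
    simp only [map_sub, map_neg]
    ring
  rw [Real.norm_eq_abs, hsplit, abs_div, abs_two]
  linarith [abs_sub _ _ |>.trans (add_le_add hplus hminus)]

theorem abs_eval_sub_eval_le (hdeg : f.totalDegree ≤ d) (hS : 0 < S)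
    (hf : ∀ z ∈ Box n, |eval z f| ≤ S) {x y : Fin n → ℝ} (hx : x ∈ Box n) (hy : y ∈ Box n) :
    |eval y f - eval x f| ≤ 2 * d ^ 2 * S * ‖y - x‖ :=
  (convex_box n).norm_image_sub_le_of_norm_fderiv_le (fun z _ => f.differentiable_eval z)
    (fun _ hz => norm_fderiv_eval_le hdeg hS hf hz) hx hy

end Markov

theorem le_half_rpow_mul_of_two_mul_le {F Δ B r c h L : ℝ} (hF : 0 < F) (hΔ : F < 2 * Δ)
    (hB : 0 ≤ B) (hr : 0 ≤ r) (hL : 1 ≤ L) (hΔr : 2 * Δ ≤ F * (B * r))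
    (hrh : r ^ (2 * L) ≤ c ^ 2 * h) :
    Δ ≤ 1 / 2 * c ^ 2 * B ^ (2 * L) * F * h := by
  set t := 2 * Δ / F
  have ht : 1 ≤ t := by rw [le_div_iff₀ hF]; linarith
  have htBr : t ≤ B * r := by rw [div_le_iff₀ hF]; linarith
  calc Δ = F / 2 * t := by simp only [t]; field_simp
    _ ≤ F / 2 * t ^ (2 : ℝ) := by rw [Real.rpow_two]; gcongr; nlinarith
    _ ≤ F / 2 * t ^ (2 * L) := by gcongr; linarith
    _ ≤ F / 2 * (B * r) ^ (2 * L) := by gcongr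
    _ ≤ F / 2 * (B ^ (2 * L) * (c ^ 2 * h)) := by rw [Real.mul_rpow hB hr]; gcongr
    _ = 1 / 2 * c ^ 2 * B ^ (2 * L) * F * h := by ring

theorem rpow_two_mul_le_sq_mul {r L c h : ℝ} (hr : 0 ≤ r) (hh : 0 ≤ h)
    (hrc : r ^ L ≤ c * √h) : r ^ (2 * L) ≤ c ^ 2 * h := by
  rw [mul_comm, Real.rpow_mul hr, Real.rpow_two, ← Real.sq_sqrt hh, ← mul_pow]
  exact pow_le_pow_left₀ (Real.rpow_nonneg hr L) hrc 2

theorem norm_le_sqrt_sum_sq {n : ℕ} (v : Fin n → ℝ) : ‖v‖ ≤ √(∑ i, v i ^ 2) :=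
  (pi_norm_le_iff_of_nonneg (Real.sqrt_nonneg _)).2 fun i =>
    Real.abs_le_sqrt (Finset.single_le_sum (fun j _ => sq_nonneg (v j)) (Finset.mem_univ i))

theorem abs_eval_le_supNorm {n : ℕ} (f : MvPolynomial (Fin n) ℝ) {z : Fin n → ℝ}
    (hz : z ∈ Box n) : |eval z f| ≤ supNorm f :=
  le_csSup ((isCompact_box n).image (continuous_abs.comp (continuous_eval f))).bddAbove
    ⟨z, hz, rfl⟩

section Constraints

variable {n m : ℕ} {g : Fin m → MvPolynomial (Fin n) ℝ}

theorem fMin_le_eval (hsub : Sg g ⊆ Box n) (f : MvPolynomial (Fin n) ℝ) {y : Fin n → ℝ}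
    (hy : y ∈ Sg g) : fMin g f ≤ eval y f :=
  csInf_le (((isCompact_box n).image (continuous_eval f)).bddBelow.mono (image_mono hsub))
    ⟨y, hy, rfl⟩

theorem euclDist_nonneg (x : Fin n → ℝ) (s : Set (Fin n → ℝ)) : 0 ≤ euclDist x s :=
  Real.sInf_nonneg (by rintro _ ⟨y, -, rfl⟩; positivity)

theorem fMin_sub_eval_le_mul_euclDist {f : MvPolynomial (Fin n) ℝ} {d : ℕ}
    (hdeg : f.totalDegree ≤ d) (hne : (Sg g).Nonempty) (hsub : Sg g ⊆ Box n)
    (hS : 0 < supNorm f) {x : Fin n → ℝ} (hx : x ∈ Box n) :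
    fMin g f - eval x f ≤ 2 * d ^ 2 * supNorm f * euclDist x (Sg g) := by
  have hM : (0 : ℝ) ≤ 2 * d ^ 2 * supNorm f := by positivity
  rw [euclDist, ← smul_eq_mul, ← Real.sInf_smul_of_nonneg hM]
  refine le_csInf (hne.image _).smul_set ?_
  rintro _ ⟨_, ⟨y, hy, rfl⟩, rfl⟩
  calc fMin g f - eval x f ≤ |eval y f - eval x f| :=
        (sub_le_sub_right (fMin_le_eval hsub f hy) _).trans (le_abs_self _)
    _ ≤ 2 * d ^ 2 * supNorm f * ‖y - x‖ :=
        abs_eval_sub_eval_le hdeg hS (fun z hz => abs_eval_le_supNorm f hz) hx (hsub hy)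
    _ ≤ 2 * d ^ 2 * supNorm f * √(∑ i, (x i - y i) ^ 2) := by
        rw [norm_sub_rev]
        exact mul_le_mul_of_nonneg_left (norm_le_sqrt_sum_sq (x - y)) hM

theorem Hfun_nonneg (g : Fin m → MvPolynomial (Fin n) ℝ) (x : Fin n → ℝ) : 0 ≤ Hfun g x :=
  Finset.sum_nonneg fun _ _ => sq_nonneg _

theorem Gfun_le_sqrt_Hfun (g : Fin m → MvPolynomial (Fin n) ℝ) (x : Fin n → ℝ) : Gfun g x ≤ √(Hfun g x) :=
  Real.iSup_le (fun j => (le_abs_self _).trans <| Real.abs_le_sqrt <|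
      Finset.single_le_sum (f := fun j => max 0 (-eval x (g j)) ^ 2)
        (fun _ _ => sq_nonneg _) (Finset.mem_univ j))
    (Real.sqrt_nonneg _)

end Constraints

/-- error bound on minima via the Łojasiewicz inequality. -/
theorem stmt11 {n m : ℕ} (f : MvPolynomial (Fin n) ℝ) (d : ℕ) (hd : f.totalDegree = d)
    (g : Fin m → MvPolynomial (Fin n) ℝ)
    (hne : (Sg g).Nonempty) (hsub : Sg g ⊆ Box n)
    (L c : ℝ) (hL : 1 ≤ L) (hc : 0 < c)
    (hLoj : ∀ x ∈ Box n, euclDist x (Sg g) ^ L ≤ c * Gfun g x)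
    (hfmin : 0 < fMin g f) :
    ∀ x ∈ Box n,
      max 0 (fMin g f - MvPolynomial.eval x f)
        ≤ (1/2) * c ^ 2 * (4 * (d : ℝ) ^ 2 * (supNorm f / fMin g f)) ^ (2 * L)
            * fMin g f * Hfun g x
          + (1/2) * fMin g f := by
  intro x hx
  obtain ⟨y₀, hy₀⟩ := hne
  have hS : 0 < supNorm f := hfmin.trans_le <| (fMin_le_eval hsub f hy₀).trans <|
    (le_abs_self _).trans (abs_eval_le_supNorm f (hsub hy₀))
  have hdist := fMin_sub_eval_le_mul_euclDist hd.le ⟨y₀, hy₀⟩ hsub hS hx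
  have hLojSq : euclDist x (Sg g) ^ (2 * L) ≤ c ^ 2 * Hfun g x :=
    rpow_two_mul_le_sq_mul (euclDist_nonneg x _) (Hfun_nonneg g x)
      ((hLoj x hx).trans (mul_le_mul_of_nonneg_left (Gfun_le_sqrt_Hfun g x) hc.le))
  have hpenalty : 0 ≤ (1/2) * c ^ 2 * (4 * (d : ℝ) ^ 2 * (supNorm f / fMin g f)) ^ (2 * L)
      * fMin g f * Hfun g x := by
    have := Hfun_nonneg g x
    positivity
  rcases le_or_gt (2 * (fMin g f - eval x f)) (fMin g f) with hsmall | hlarge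
  · exact (max_le (by positivity) (by linarith)).trans (le_add_of_nonneg_left hpenalty)
  rw [max_eq_right (by linarith)]
  have hexcess := le_half_rpow_mul_of_two_mul_le
    (B := 4 * (d : ℝ) ^ 2 * (supNorm f / fMin g f)) hfmin hlarge (by positivity)
    (euclDist_nonneg x _) hL (by field_simp; linarith) hLojSq
  linarith
end

section
/- Let f be a real polynomial in n variables with deg f ≤ d, and write f = Σ_{k=0}^d p_k where p_k is the homogeneous component of f of degree k. Then for every 0 ≤ k ≤ d, sup_{x ∈ [0,1]ⁿ} |p_k(x)| ≤ (4e)^d · sup_{x ∈ [0,1]ⁿ} |f(x)|, where e is Euler's number. -/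
open MvPolynomial

/-!
Along a ray, `t ↦ f (t • x)` is the univariate polynomial `∑ₖ pₖ(x) tᵏ` of degree at most
`d`, bounded on `[0, 1]` by the sup of `|f|` on the cube, so it suffices to bound the
coefficients of a univariate polynomial by its sup on `[0, 1]`. Interpolating at the nodes
`j / (d + 1)`, the Lagrange basis polynomial at node `j` is `(d + 1)ᵈ / (j! (d - j)!)` (up to
sign) times a monic product of `d` factors `X - c` with `|c| ≤ 1`, whose coefficients are at
most `2ᵈ`. Summing over `j` gives the constant `4ᵈ (d + 1)ᵈ / d! ≤ (4e)ᵈ`.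
-/

open Finset Real

open scoped Nat

theorem prod_erase_range_abs_sub (d j : ℕ) (hj : j ≤ d) :
    ∏ i ∈ (range (d + 1)).erase j, |(j : ℝ) - i| = j ! * (d - j)! := by
  have hsplit : (range (d + 1)).erase j = range j ∪ Ico (j + 1) (d + 1) := by
    ext i; simp only [mem_erase, mem_range, mem_union, mem_Ico]; omega
  have hdisj : Disjoint (range j) (Ico (j + 1) (d + 1)) :=
    disjoint_left.2 fun i hi hi' => by simp only [mem_range, mem_Ico] at hi hi'; omega
  rw [hsplit, prod_union hdisj, ← prod_range_add_one_eq_factorial j,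
    ← prod_range_reflect _ j, prod_Ico_eq_prod_range, show d + 1 - (j + 1) = d - j by omega,
    ← prod_range_add_one_eq_factorial (d - j)]
  push_cast
  congr 1 <;> refine prod_congr rfl fun i hi => ?_
  · rw [mem_range] at hi
    rw [Nat.cast_sub (by omega), Nat.cast_sub (by omega), Nat.cast_one,
      show (j : ℝ) - (j - 1 - i) = i + 1 by ring]
    exact abs_of_nonneg (by positivity)
  · rw [abs_sub_comm, show (j : ℝ) + 1 + i - j = i + 1 by ring]
    exact abs_of_nonneg (by positivity)

theorem add_one_pow_le_exp_one_pow_mul_factorial (d : ℕ) :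
    ((d : ℝ) + 1) ^ d ≤ exp 1 ^ d * d ! := by
  induction d with
  | zero => simp
  | succ d ih =>
    calc ((d + 1 : ℕ) + 1 : ℝ) ^ (d + 1)
        = (1 + ((d + 1 : ℕ) : ℝ)⁻¹) ^ (d + 1) * ((d + 1) * (d + 1) ^ d) := by
          rw [← pow_succ', ← mul_pow]; congr 1; push_cast; field_simp
      _ ≤ exp 1 * ((d + 1) * (exp 1 ^ d * d !)) := by
          gcongr
          exact one_add_inv_pow_le_exp
      _ = exp 1 ^ (d + 1) * (d + 1)! := by push_cast [Nat.factorial_succ]; ring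

theorem sum_range_inv_factorial_mul_factorial (d : ℕ) :
    ∑ j ∈ range (d + 1), ((j ! : ℝ) * (d - j)!)⁻¹ = 2 ^ d / d ! := by
  have h := congrArg (Nat.cast (R := ℝ)) (Nat.sum_range_choose d)
  push_cast at h
  rw [← h, sum_div]
  refine sum_congr rfl fun j hj => ?_
  rw [Nat.cast_choose ℝ (Nat.lt_succ_iff.1 (mem_range.1 hj))]
  field_simp

namespace Polynomial

theorem abs_coeff_prod_X_sub_C_le {ι : Type*} (s : Finset ι) (y : ι → ℝ)
    (hy : ∀ i ∈ s, |y i| ≤ 1) (k : ℕ) :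
    |(∏ i ∈ s, (X - C (y i))).coeff k| ≤ 2 ^ #s := by
  classical
  induction s using Finset.induction_on generalizing k with
  | empty => rw [prod_empty, coeff_one]; split_ifs <;> norm_num
  | @insert a s ha ih =>
    have ih' := ih (fun i hi => hy i (mem_insert_of_mem hi))
    have hXQ : |(X * ∏ i ∈ s, (X - C (y i))).coeff k| ≤ 2 ^ #s := by
      cases k with
      | zero => simp
      | succ m => rw [coeff_X_mul]; exact ih' m
    have hCQ : |(C (y a) * ∏ i ∈ s, (X - C (y i))).coeff k| ≤ 2 ^ #s := by
      rw [coeff_C_mul, abs_mul]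
      exact (mul_le_of_le_one_left (abs_nonneg _) (hy a (mem_insert_self a s))).trans (ih' k)
    rw [prod_insert ha, sub_mul, coeff_sub, card_insert_of_notMem ha, pow_succ, mul_two]
    exact (abs_sub _ _).trans (add_le_add hXQ hCQ)

theorem abs_coeff_basis_range_div_le (d k : ℕ) {j : ℕ} (hj : j ∈ range (d + 1)) :
    |(Lagrange.basis (range (d + 1)) (fun i : ℕ => (i : ℝ) / (d + 1)) j).coeff k|
      ≤ 2 ^ d * ((d + 1) ^ d * ((j ! : ℝ) * (d - j)!)⁻¹) := by
  set s := range (d + 1)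
  set v : ℕ → ℝ := fun i => i / (d + 1)
  have hd : (0 : ℝ) < d + 1 := by positivity
  have hcard : #(s.erase j) = d := by rw [card_erase_of_mem hj, card_range, Nat.add_sub_cancel]
  have hbasis : Lagrange.basis s v j
      = C (∏ i ∈ s.erase j, (v j - v i)⁻¹) * ∏ i ∈ s.erase j, (X - C (v i)) := by
    simp only [Lagrange.basis, Lagrange.basisDivisor]
    rw [prod_mul_distrib, ← map_prod]
  have hscale : |∏ i ∈ s.erase j, (v j - v i)⁻¹| = (d + 1) ^ d * ((j ! : ℝ) * (d - j)!)⁻¹ := by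
    simp_rw [abs_prod, v, ← sub_div, abs_inv, abs_div, abs_of_pos hd, inv_div]
    rw [prod_div_distrib, prod_const, hcard,
      prod_erase_range_abs_sub d j (Nat.lt_succ_iff.1 (mem_range.1 hj)), div_eq_mul_inv]
  have hnodes : ∀ i ∈ s.erase j, |v i| ≤ 1 := fun i hi => by
    have hi : (i : ℝ) ≤ d := by
      exact_mod_cast Nat.lt_succ_iff.1 (mem_range.1 (mem_of_mem_erase hi))
    rw [abs_of_nonneg (by positivity), div_le_one hd]
    linarith
  rw [hbasis, coeff_C_mul, abs_mul, hscale, mul_comm]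
  gcongr
  simpa only [hcard] using abs_coeff_prod_X_sub_C_le _ v hnodes k

theorem abs_coeff_le_of_forall_mem_Icc_abs_eval_le {p : ℝ[X]} {d : ℕ} (hp : p.natDegree ≤ d)
    {M : ℝ} (hM : ∀ t ∈ Set.Icc (0 : ℝ) 1, |p.eval t| ≤ M) (k : ℕ) :
    |p.coeff k| ≤ (4 * exp 1) ^ d * M := by
  set s := range (d + 1)
  set v : ℕ → ℝ := fun i => i / (d + 1)
  have hd : (0 : ℝ) < d + 1 := by positivity
  have hv : ∀ j ∈ s, v j ∈ Set.Icc (0 : ℝ) 1 := fun j hj => by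
    have hj : (j : ℝ) ≤ d := by exact_mod_cast Nat.lt_succ_iff.1 (mem_range.1 hj)
    exact ⟨by positivity, (div_le_one hd).2 (by linarith)⟩
  have hinj : Set.InjOn v s := fun a _ b _ h => by
    simpa only [v, div_left_inj' hd.ne', Nat.cast_inj] using h
  have hdeg : p.degree < #s := by
    rw [card_range]
    exact degree_le_natDegree.trans_lt (by exact_mod_cast Nat.lt_succ_of_le hp)
  have hM0 : 0 ≤ M := (abs_nonneg _).trans (hM 0 ⟨le_rfl, zero_le_one⟩)
  have hfact : ((d : ℝ) + 1) ^ d / d ! ≤ exp 1 ^ d :=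
    (div_le_iff₀ (by positivity)).2 (add_one_pow_le_exp_one_pow_mul_factorial d)
  calc |p.coeff k| = |∑ j ∈ s, p.eval (v j) * (Lagrange.basis s v j).coeff k| := by
        conv_lhs => rw [Lagrange.eq_interpolate hinj hdeg, Lagrange.interpolate_apply,
          finsetSum_coeff]
        simp_rw [coeff_C_mul]
    _ ≤ ∑ j ∈ s, M * (2 ^ d * ((d + 1) ^ d * ((j ! : ℝ) * (d - j)!)⁻¹)) := by
        refine (abs_sum_le_sum_abs _ _).trans (sum_le_sum fun j hj => ?_)
        rw [abs_mul]
        exact mul_le_mul (hM _ (hv j hj)) (abs_coeff_basis_range_div_le d k hj)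
          (abs_nonneg _) hM0
    _ = M * (4 ^ d * ((d + 1) ^ d / d !)) := by
        rw [← mul_sum, ← mul_sum, ← mul_sum, sum_range_inv_factorial_mul_factorial,
          show (4 : ℝ) = 2 * 2 by norm_num, mul_pow]
        ring
    _ ≤ (4 * exp 1) ^ d * M := by
        rw [mul_comm, mul_pow]
        gcongr

end Polynomial

namespace MvPolynomial

variable {σ R : Type*} [CommSemiring R]

theorem IsHomogeneous.eval_smul {p : MvPolynomial σ R} {m : ℕ} (hp : p.IsHomogeneous m)
    (t : R) (x : σ → R) : eval (t • x) p = t ^ m * eval x p := by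
  rw [eval_eq, eval_eq, mul_sum]
  refine sum_congr rfl fun d hd => ?_
  simp only [Pi.smul_apply, smul_eq_mul, mul_pow, prod_mul_distrib, prod_pow_eq_pow_sum,
    ← hp.degree_eq_sum_deg_support hd]
  ring

noncomputable def radialRestriction (f : MvPolynomial σ R) (x : σ → R) : Polynomial R :=
  ∑ m ∈ range (f.totalDegree + 1),
    Polynomial.C (eval x (homogeneousComponent m f)) * Polynomial.X ^ m

variable (f : MvPolynomial σ R) (x : σ → R)

theorem natDegree_radialRestriction_le : (radialRestriction f x).natDegree ≤ f.totalDegree :=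
  Polynomial.natDegree_sum_le_of_forall_le _ _ fun _ hm =>
    (Polynomial.natDegree_C_mul_X_pow_le _ _).trans (Nat.lt_succ_iff.1 (mem_range.1 hm))

theorem coeff_radialRestriction (k : ℕ) :
    (radialRestriction f x).coeff k = eval x (homogeneousComponent k f) := by
  simp only [radialRestriction, Polynomial.finsetSum_coeff, Polynomial.coeff_C_mul_X_pow,
    sum_ite_eq, mem_range]
  split_ifs with hk
  · rfl
  · rw [homogeneousComponent_eq_zero k f (by omega), map_zero]

theorem eval_radialRestriction (t : R) :
    (radialRestriction f x).eval t = eval (t • x) f := by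
  conv_rhs => rw [← sum_homogeneousComponent f]
  simp only [radialRestriction, Polynomial.eval_finsetSum, Polynomial.eval_mul,
    Polynomial.eval_C, Polynomial.eval_pow, Polynomial.eval_X, map_sum]
  exact sum_congr rfl fun m _ =>
    by rw [(homogeneousComponent_isHomogeneous m f).eval_smul, mul_comm]

end MvPolynomial

theorem Box01_eq_Icc (n : ℕ) : Box01 n = Set.Icc 0 1 := by
  ext x
  simp only [Box01, Set.mem_Icc, Pi.le_def, forall_and, Set.mem_ofPred_eq, Pi.zero_apply,
    Pi.one_apply]

theorem smul_mem_Box01 {n : ℕ} {t : ℝ} (ht : t ∈ Set.Icc (0 : ℝ) 1) {x : Fin n → ℝ}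
    (hx : x ∈ Box01 n) : t • x ∈ Box01 n := fun i =>
  ⟨mul_nonneg ht.1 (hx i).1, mul_le_one₀ ht.2 (hx i).1 (hx i).2⟩

theorem abs_eval_le_supNorm01 {n : ℕ} (f : MvPolynomial (Fin n) ℝ) {x : Fin n → ℝ}
    (hx : x ∈ Box01 n) : |eval x f| ≤ supNorm01 f := by
  refine le_csSup ?_ ⟨x, hx, rfl⟩
  rw [Box01_eq_Icc]
  exact (isCompact_Icc.image (continuous_abs.comp f.continuous_eval)).bddAbove

/-- bound on homogeneous components on `[0,1]^n`. -/
theorem stmt16 {n : ℕ} (f : MvPolynomial (Fin n) ℝ) (d : ℕ) (hd : f.totalDegree ≤ d) :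
    ∀ k ≤ d,
      supNorm01 (MvPolynomial.homogeneousComponent k f)
        ≤ (4 * Real.exp 1) ^ d * supNorm01 f := by
  intro k _
  refine csSup_le (Set.image_nonempty.2 ⟨0, fun _ => ⟨le_rfl, zero_le_one⟩⟩) ?_
  rintro _ ⟨x, hx, rfl⟩
  dsimp only
  rw [← coeff_radialRestriction]
  refine Polynomial.abs_coeff_le_of_forall_mem_Icc_abs_eval_le
    ((natDegree_radialRestriction_le f x).trans hd) (fun t ht => ?_) k
  rw [eval_radialRestriction]
  exact abs_eval_le_supNorm01 f (smul_mem_Box01 ht hx)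
end
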